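/- Let d ≥ 1, n ≥ 1, x ∈ [0,1]^d, let k = (k_1,…,k_d) be a multi-index with k_i ≤ n for all i, and let f : ℝ^d → ℝ. If ξ_{n−k}(x) = (ξ^1,…,ξ^d) is a random vector whose components are independent with ξ^i distributed binomially Bin(n−k_i, x_i), then ∂^{|k|}B̃_n(f;x)/∂x_1^{k_1}⋯∂x_d^{k_d} = (∏_{i=1}^{d} n(n−1)⋯(n−k_i+1) / n^{|k|}) · E[n^{|k|} Δ^k f(ξ_{n−k}(x)/n)], where Δ^k is the composition of the k_i-fold iterated forward differences with step 1/n in each coordinate. -/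

import Mathlib

/-!
Write `B̃_n(f)` as a Bernstein sum `∑_j g(j) ∏_i b_{m_i,j_i}(x_i)` over the grid `j ∈ ℕ^d`, with
degree vector `m = (n,…,n)` and coefficients `g(j) = f(j/n)`. Since
`b'_{m,a} = m (b_{m-1,a-1} - b_{m-1,a})`, summation by parts shows that `∂/∂x_i` of a Bernstein sum
is `m_i` times the Bernstein sum of degree `m - e_i` whose coefficients are the forward differences
of `g` in direction `e_i`. Iterating, the mixed partial derivative is `∏_i n(n-1)⋯(n-k_i+1)` times
the Bernstein sum of degree `n - k` with coefficients `Δ^k f(j/n)`. The Bernstein weights of degree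
`n - k_i` at `x_i` are the probabilities `P(ξ^i = a)`, and by independence their products are the
joint law of `ξ`, so this Bernstein sum is `E[Δ^k f(ξ/n)]`.
-/

open MeasureTheory ProbabilityTheory

/-- The `n`-th "cube" Bernstein polynomial of `f : ℝ^d → ℝ`. -/
noncomputable def cubeBernstein (d n : ℕ) (f : (Fin d → ℝ) → ℝ) (x : Fin d → ℝ) : ℝ :=
  ∑ j ∈ Fintype.piFinset (fun _ : Fin d => Finset.range (n + 1)),
    f (fun i => (j i : ℝ) / n) *
      ∏ i, (n.choose (j i) : ℝ) * x i ^ (j i) * (1 - x i) ^ (n - j i)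

/-- Partial derivative of `g : ℝ^d → ℝ` in the `i`-th coordinate. -/
noncomputable def partialDeriv' {d : ℕ} (i : Fin d) (g : (Fin d → ℝ) → ℝ) :
    (Fin d → ℝ) → ℝ :=
  fun x => deriv (fun t => g (Function.update x i t)) (x i)

/-- Mixed partial derivative `∂^{|k|}/∂x_1^{k_1}⋯∂x_d^{k_d}` of `g : ℝ^d → ℝ`
(the derivative in `x_1` is applied outermost). -/
noncomputable def mixedPartial {d : ℕ} (k : Fin d → ℕ) (g : (Fin d → ℝ) → ℝ) :
    (Fin d → ℝ) → ℝ :=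
  (List.finRange d).foldr (fun i h => (partialDeriv' i)^[k i] h) g

/-- Forward difference of `g : ℝ^d → ℝ` in the `i`-th coordinate with step `z`. -/
def coordFwdDiff {d : ℕ} (i : Fin d) (z : ℝ) (g : (Fin d → ℝ) → ℝ) :
    (Fin d → ℝ) → ℝ :=
  fun x => g (Function.update x i (x i + z)) - g x

/-- The iterated finite difference `Δ^k = Δ_{(x_1)}^{k_1} ∘ ⋯ ∘ Δ_{(x_d)}^{k_d}` with
step `1/n` in each coordinate. -/
noncomputable def multiFwdDiffN {d : ℕ} (n : ℕ) (k : Fin d → ℕ) (g : (Fin d → ℝ) → ℝ) :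
    (Fin d → ℝ) → ℝ :=
  (List.finRange d).foldr (fun i h => (coordFwdDiff i (1 / (n : ℝ)))^[k i] h) g

open Finset Function fwdDiff

theorem hasDerivAt_sum_mul_bernsteinPolynomial_eval (m : ℕ) (c : ℕ → ℝ) (t : ℝ) :
    HasDerivAt (fun s => ∑ a ∈ range (m + 1), c a * (bernsteinPolynomial ℝ m a).eval s)
      (m * ∑ a ∈ range m, (c (a + 1) - c a) * (bernsteinPolynomial ℝ (m - 1) a).eval t) t := by
  refine (HasDerivAt.fun_sum fun a _ =>
    ((bernsteinPolynomial ℝ m a).hasDerivAt t).const_mul (c a)).congr_deriv ?_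
  let B : ℕ → ℝ := fun a => (bernsteinPolynomial ℝ (m - 1) a).eval t
  have hshift : ∑ a ∈ range m, c (a + 1) * B (a + 1) + c 0 * B 0
      = ∑ a ∈ range m, c a * B a + c m * B m := by
    rw [← sum_range_succ' (fun a => c a * B a), sum_range_succ]
  have htop : (m : ℝ) * B m = 0 := by
    rcases m with _ | m
    · simp
    · simp [B, bernsteinPolynomial.eq_zero_of_lt ℝ (Nat.lt_succ_self m)]
  have hterm : ∀ a, c (a + 1) * (Polynomial.derivative (bernsteinPolynomial ℝ m (a + 1))).eval t
      = m * (c (a + 1) * B a) - m * (c (a + 1) * B (a + 1)) := by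
    intro a
    simp only [bernsteinPolynomial.derivative_succ, Polynomial.eval_mul, Polynomial.eval_sub,
      Polynomial.eval_natCast, B]
    ring
  have hzero : c 0 * (Polynomial.derivative (bernsteinPolynomial ℝ m 0)).eval t
      = -(m * (c 0 * B 0)) := by
    simp only [bernsteinPolynomial.derivative_zero, Polynomial.eval_mul, Polynomial.eval_neg,
      Polynomial.eval_natCast, B]
    ring
  rw [sum_range_succ', hzero]
  simp only [hterm, sum_sub_distrib, ← mul_sum, sub_mul]
  linear_combination -(c m * htop) - (m : ℝ) * hshift

section

variable {d : ℕ}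

noncomputable def bernsteinSum (m : Fin d → ℕ) (g : (Fin d → ℕ) → ℝ) (x : Fin d → ℝ) : ℝ :=
  ∑ j ∈ Fintype.piFinset fun i => range (m i + 1),
    g j * ∏ i, (bernsteinPolynomial ℝ (m i) (j i)).eval (x i)

theorem bernsteinSum_sub (m : Fin d → ℕ) (g g' : (Fin d → ℕ) → ℝ) (x : Fin d → ℝ) :
    bernsteinSum m (fun j => g j - g' j) x = bernsteinSum m g x - bernsteinSum m g' x := by
  simp only [bernsteinSum, sub_mul, sum_sub_distrib]

theorem bernsteinSum_eq_sum_removeNth (m : Fin (d + 1) → ℕ) (g : (Fin (d + 1) → ℕ) → ℝ)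
    (x : Fin (d + 1) → ℝ) (i : Fin (d + 1)) :
    bernsteinSum m g x = ∑ a ∈ range (m i + 1),
      bernsteinSum (i.removeNth m) (fun r => g (i.insertNth a r)) (i.removeNth x) *
        (bernsteinPolynomial ℝ (m i) a).eval (x i) := by
  have hbox := Finset.filter_piFinset_eq_map_insertNthEquiv (p := i)
    (fun l => range (m l + 1)) (fun _ => True)
  simp only [filter_true] at hbox
  rw [bernsteinSum, hbox, sum_map, sum_product]
  refine sum_congr rfl fun a _ => ?_
  rw [bernsteinSum, sum_mul]
  refine sum_congr rfl fun r _ => ?_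
  simp only [Equiv.coe_toEmbedding, Fin.insertNthEquiv_apply, Fin.prod_univ_succAbove _ i,
    Fin.insertNth_apply_same, Fin.insertNth_apply_succAbove, Fin.removeNth]
  rw [show g (Fin.insertNthEquiv (fun _ => ℕ) i (a, r)) = g (i.insertNth a r) from rfl]
  ring

theorem partialDeriv'_bernsteinSum (m : Fin d → ℕ) (g : (Fin d → ℕ) → ℝ) (i : Fin d) :
    partialDeriv' i (bernsteinSum m g) =
      fun x => m i * bernsteinSum (update m i (m i - 1)) (Δ_[Pi.single i 1] g) x := by
  cases d with
  | zero => exact i.elim0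
  | succ d =>
    funext x
    set c : ℕ → ℝ := fun a =>
      bernsteinSum (i.removeNth m) (fun r => g (i.insertNth a r)) (i.removeNth x)
    have hderiv : HasDerivAt (fun t => bernsteinSum m g (update x i t))
        (m i * ∑ a ∈ range (m i),
          (c (a + 1) - c a) * (bernsteinPolynomial ℝ (m i - 1) a).eval (x i)) (x i) := by
      simp only [bernsteinSum_eq_sum_removeNth _ _ _ i, Fin.removeNth_update, update_self]
      exact hasDerivAt_sum_mul_bernsteinPolynomial_eval (m i) c (x i)
    have hcoeff : ∀ a, bernsteinSum (i.removeNth (update m i (m i - 1)))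
        (fun r => Δ_[Pi.single i 1] g (i.insertNth a r)) (i.removeNth x) = c (a + 1) - c a := by
      intro a
      rw [Fin.removeNth_update, ← bernsteinSum_sub]
      congr 1
      funext r
      rw [fwdDiff, ← Fin.insertNth_zero_right, ← Fin.insertNth_add, add_zero]
    rw [partialDeriv', hderiv.deriv, bernsteinSum_eq_sum_removeNth _ _ x i]
    simp only [update_self, hcoeff]
    rcases Nat.eq_zero_or_pos (m i) with h | h
    · simp [h]
    · rw [Nat.sub_add_cancel h]

theorem partialDeriv'_const_mul (i : Fin d) (c : ℝ) (h : (Fin d → ℝ) → ℝ) :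
    partialDeriv' i (fun x => c * h x) = fun x => c * partialDeriv' i h x :=
  funext fun _ => deriv_const_mul_field c

theorem iterate_partialDeriv'_const_mul (i : Fin d) (c : ℝ) (h : (Fin d → ℝ) → ℝ)
    (r : ℕ) :
    (partialDeriv' i)^[r] (fun x => c * h x) = fun x => c * (partialDeriv' i)^[r] h x := by
  induction r generalizing h with
  | zero => rfl
  | succ r ih => rw [iterate_succ_apply, partialDeriv'_const_mul, ih, ← iterate_succ_apply]

theorem iterate_partialDeriv'_bernsteinSum (m : Fin d → ℕ) (g : (Fin d → ℕ) → ℝ)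
    (i : Fin d) (r : ℕ) :
    (partialDeriv' i)^[r] (bernsteinSum m g) = fun x => ((m i).descFactorial r : ℝ) *
      bernsteinSum (update m i (m i - r)) ((Δ_[Pi.single i 1])^[r] g) x := by
  induction r with
  | zero => simp
  | succ r ih =>
    rw [iterate_succ_apply', ih, partialDeriv'_const_mul, partialDeriv'_bernsteinSum]
    funext x
    simp only [update_self, update_idem, iterate_succ_apply', Nat.descFactorial_succ,
      Nat.sub_sub, Nat.cast_mul]
    ring

theorem foldr_iterate_partialDeriv'_bernsteinSum (m k : Fin d → ℕ)
    (g : (Fin d → ℕ) → ℝ) (l : List (Fin d)) (hl : l.Nodup) :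
    l.foldr (fun i h => (partialDeriv' i)^[k i] h) (bernsteinSum m g) =
      fun x => (∏ i ∈ l.toFinset, ((m i).descFactorial (k i) : ℝ)) *
        bernsteinSum (fun i => if i ∈ l then m i - k i else m i)
          (l.foldr (fun i h => (Δ_[Pi.single i 1])^[k i] h) g) x := by
  induction l with
  | nil => simp
  | cons i l ih =>
    obtain ⟨hi, hl⟩ := List.nodup_cons.mp hl
    have hdeg : update (fun j => if j ∈ l then m j - k j else m j) i (m i - k i)
        = fun j => if j ∈ i :: l then m j - k j else m j := by
      funext j
      rcases eq_or_ne j i with rfl | hj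
      · simp
      · simp [hj]
    rw [List.foldr_cons, ih hl, iterate_partialDeriv'_const_mul,
      iterate_partialDeriv'_bernsteinSum]
    funext x
    simp only [hi, if_false, hdeg, List.toFinset_cons,
      prod_insert (List.mem_toFinset.not.mpr hi), List.foldr_cons]
    ring

theorem mixedPartial_bernsteinSum (m k : Fin d → ℕ) (g : (Fin d → ℕ) → ℝ) :
    mixedPartial k (bernsteinSum m g) =
      fun x => (∏ i, ((m i).descFactorial (k i) : ℝ)) *
        bernsteinSum (fun i => m i - k i)
          ((List.finRange d).foldr (fun i h => (Δ_[Pi.single i 1])^[k i] h) g) x := by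
  simpa [mixedPartial, List.mem_finRange] using
    foldr_iterate_partialDeriv'_bernsteinSum m k g _ (List.nodup_finRange d)

theorem fwdDiff_iterate_comp_addMonoidHom {M M' G : Type*} [AddCommMonoid M] [AddCommMonoid M']
    [AddCommGroup G] (φ : M →+ M') (h : M) (g : M' → G) (r : ℕ) :
    (Δ_[h])^[r] (g ∘ φ) = (Δ_[φ h])^[r] g ∘ φ := by
  induction r with
  | zero => rfl
  | succ r ih =>
    rw [iterate_succ_apply', ih, iterate_succ_apply']
    funext x
    simp [fwdDiff]

theorem coordFwdDiff_eq_fwdDiff (i : Fin d) (z : ℝ) :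
    coordFwdDiff i z = Δ_[Pi.single i z] := by
  funext g x
  rw [coordFwdDiff, fwdDiff, ← update_self i (x i + z) x]
  congr 2
  funext l
  rcases eq_or_ne l i with rfl | hl
  · simp
  · simp [hl]

noncomputable def gridPoint (n : ℕ) : (Fin d → ℕ) →+ (Fin d → ℝ) where
  toFun j i := (j i : ℝ) / n
  map_zero' := by ext; simp
  map_add' j j' := by ext; simp [add_div]

theorem gridPoint_single (n : ℕ) (i : Fin d) :
    gridPoint n (Pi.single i 1) = Pi.single i (1 / (n : ℝ)) := by
  funext l
  rcases eq_or_ne l i with rfl | hl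
  · simp [gridPoint]
  · simp [gridPoint, hl]

theorem foldr_iterate_coordFwdDiff_comp_gridPoint (n : ℕ) (k : Fin d → ℕ)
    (f : (Fin d → ℝ) → ℝ) (l : List (Fin d)) :
    l.foldr (fun i h => (coordFwdDiff i (1 / (n : ℝ)))^[k i] h) f ∘ gridPoint n =
      l.foldr (fun i h => (Δ_[Pi.single i 1])^[k i] h) (f ∘ gridPoint n) := by
  induction l with
  | nil => rfl
  | cons i l ih =>
    rw [List.foldr_cons, List.foldr_cons, ← ih, fwdDiff_iterate_comp_addMonoidHom,
      gridPoint_single, coordFwdDiff_eq_fwdDiff]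

theorem cubeBernstein_eq_bernsteinSum (n : ℕ) (f : (Fin d → ℝ) → ℝ) :
    cubeBernstein d n f = bernsteinSum (fun _ => n) (f ∘ gridPoint n) := by
  funext x
  simp [cubeBernstein, bernsteinSum, bernsteinPolynomial, gridPoint]

end

theorem ae_mem_of_measure_preimage_singleton_eq_zero {Ω α : Type*} [MeasurableSpace Ω]
    [Countable α] {μ : Measure Ω} {X : Ω → α} {s : Set α}
    (h : ∀ a ∉ s, μ (X ⁻¹' {a}) = 0) : ∀ᵐ ω ∂μ, X ω ∈ s := by
  rw [ae_iff]
  have hset : {ω | ¬X ω ∈ s} = ⋃ a ∈ sᶜ, X ⁻¹' {a} := by ext; simp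
  rw [hset, measure_biUnion_null_iff (Set.to_countable _)]
  exact h

theorem integral_comp_eq_sum_of_ae_mem {Ω α : Type*} [MeasurableSpace Ω] [MeasurableSpace α]
    [Countable α] [MeasurableSingletonClass α] {μ : Measure Ω} [IsFiniteMeasure μ] {X : Ω → α}
    (hX : Measurable X) {s : Finset α} (hs : ∀ᵐ ω ∂μ, X ω ∈ s) (F : α → ℝ) :
    ∫ ω, F (X ω) ∂μ = ∑ a ∈ s, μ.real (X ⁻¹' {a}) * F a := by
  have hs' : ∀ᵐ a ∂μ.map X, a ∈ (s : Set α) :=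
    (ae_map_iff hX.aemeasurable s.countable_toSet.measurableSet).mpr hs
  rw [← integral_map hX.aemeasurable (measurable_of_countable F).aestronglyMeasurable,
    ← Measure.restrict_eq_self_of_ae_mem hs', setIntegral_finset s IntegrableOn.finset]
  simp [map_measureReal_apply hX (measurableSet_singleton _)]

namespace ProbabilityTheory

theorem iIndepFun.measureReal_preimage_singleton {Ω ι : Type*} [MeasurableSpace Ω]
    [Fintype ι] {β : ι → Type*} [∀ i, MeasurableSpace (β i)] [∀ i, MeasurableSingletonClass (β i)]
    {μ : Measure Ω} {ξ : ∀ i, Ω → β i} (h : iIndepFun ξ μ) (j : ∀ i, β i) :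
    μ.real ((fun ω i => ξ i ω) ⁻¹' {j}) = ∏ i, μ.real (ξ i ⁻¹' {j i}) := by
  have hset : (fun ω i => ξ i ω) ⁻¹' {j} = ⋂ i ∈ (univ : Finset ι), ξ i ⁻¹' {j i} := by
    ext; simp [funext_iff]
  rw [measureReal_def, hset, h.measure_inter_preimage_eq_mul _ fun i _ => measurableSet_singleton _,
    ENNReal.toReal_prod]
  rfl

theorem iIndepFun.integral_comp_eq_sum {Ω ι : Type*} [MeasurableSpace Ω] [Fintype ι]
    [DecidableEq ι] {μ : Measure Ω} [IsFiniteMeasure μ] {ξ : ι → Ω → ℕ}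
    (hmeas : ∀ i, Measurable (ξ i)) (hindep : iIndepFun ξ μ) (N : ι → ℕ)
    (hN : ∀ i a, N i < a → μ (ξ i ⁻¹' {a}) = 0) (F : (ι → ℕ) → ℝ) :
    ∫ ω, F (fun i => ξ i ω) ∂μ =
      ∑ j ∈ Fintype.piFinset fun i => range (N i + 1), F j * ∏ i, μ.real (ξ i ⁻¹' {j i}) := by
  have hbox : ∀ᵐ ω ∂μ, (fun i => ξ i ω) ∈ Fintype.piFinset fun i => range (N i + 1) := by
    simp only [Fintype.mem_piFinset, mem_range, Nat.lt_succ_iff, ← Set.mem_Iic]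
    refine ae_all_iff.mpr fun i => ae_mem_of_measure_preimage_singleton_eq_zero fun a ha => ?_
    exact hN i a (not_le.mp ha)
  rw [integral_comp_eq_sum_of_ae_mem (measurable_pi_lambda _ hmeas) hbox]
  exact sum_congr rfl fun j _ => by rw [hindep.measureReal_preimage_singleton, mul_comm]

end ProbabilityTheory

theorem cubeBernstein_mixedPartial_eq_expectation_general {Ω : Type*} [MeasurableSpace Ω]
    (μ : Measure Ω) [IsProbabilityMeasure μ] (d n : ℕ) (hn : 1 ≤ n)
    (x : Fin d → ℝ) (hx : x ∈ Set.Icc (0 : Fin d → ℝ) 1) (k : Fin d → ℕ)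
    (f : (Fin d → ℝ) → ℝ)
    (ξ : Fin d → Ω → ℕ) (hmeas : ∀ i, Measurable (ξ i))
    (hindep : iIndepFun ξ μ)
    (hdist : ∀ i, ∀ m : ℕ, μ {ω | ξ i ω = m} =
      ENNReal.ofReal
        (((n - k i).choose m : ℝ) * x i ^ m * (1 - x i) ^ (n - k i - m))) :
    mixedPartial k (cubeBernstein d n f) x =
      ((∏ i, (n.descFactorial (k i) : ℝ)) / (n : ℝ) ^ (∑ i, k i)) *
        ∫ ω, (n : ℝ) ^ (∑ i, k i) *
          multiFwdDiffN n k f (fun i => (ξ i ω : ℝ) / n) ∂μ := by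
  have hweight : ∀ i a,
      μ.real (ξ i ⁻¹' {a}) = (bernsteinPolynomial ℝ (n - k i) a).eval (x i) := by
    intro i a
    have hB : (bernsteinPolynomial ℝ (n - k i) a).eval (x i) =
        ((n - k i).choose a : ℝ) * x i ^ a * (1 - x i) ^ (n - k i - a) := by
      simp [bernsteinPolynomial]
    rw [measureReal_def, show ξ i ⁻¹' {a} = {ω | ξ i ω = a} from rfl, hdist, ← hB]
    exact ENNReal.toReal_ofReal (bernstein_nonneg (x := ⟨x i, hx.1 i, hx.2 i⟩))
  have hnull : ∀ i a, n - k i < a → μ (ξ i ⁻¹' {a}) = 0 := by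
    intro i a ha
    simp [Set.preimage, hdist, Nat.choose_eq_zero_of_lt ha]
  have hsample : ∀ ω, multiFwdDiffN n k f (fun i => (ξ i ω : ℝ) / n) =
      (List.finRange d).foldr (fun i h => (Δ_[Pi.single i 1])^[k i] h) (f ∘ gridPoint n)
        (fun i => ξ i ω) :=
    fun ω => congrFun (foldr_iterate_coordFwdDiff_comp_gridPoint n k f _) _
  have hpow : (n : ℝ) ^ (∑ i, k i) ≠ 0 := pow_ne_zero _ (Nat.cast_ne_zero.mpr (by omega))
  rw [cubeBernstein_eq_bernsteinSum, mixedPartial_bernsteinSum, integral_const_mul]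
  simp only [hsample, hindep.integral_comp_eq_sum hmeas _ hnull, hweight]
  rw [bernsteinSum]
  field_simp

/-- If `ξ = (ξ¹,…,ξᵈ)` is a random vector on a probability space whose components are
independent, with `ξⁱ` binomially distributed `Bin(n - k_i, x_i)`, then
`∂^{|k|}B̃_n(f;x)/∂x^k = (∏_i n(n-1)⋯(n-k_i+1) / n^{|k|}) · E[n^{|k|} Δ^k f(ξ/n)]`. -/
theorem cubeBernstein_mixedPartial_eq_expectation {Ω : Type*} [MeasurableSpace Ω]
    (μ : Measure Ω) [IsProbabilityMeasure μ] (d n : ℕ) (hd : 1 ≤ d) (hn : 1 ≤ n)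
    (x : Fin d → ℝ) (hx : x ∈ Set.Icc (0 : Fin d → ℝ) 1) (k : Fin d → ℕ)
    (hk : ∀ i, k i ≤ n) (f : (Fin d → ℝ) → ℝ)
    (ξ : Fin d → Ω → ℕ) (hmeas : ∀ i, Measurable (ξ i))
    (hindep : iIndepFun ξ μ)
    (hdist : ∀ i, ∀ m : ℕ, μ {ω | ξ i ω = m} =
      ENNReal.ofReal
        (((n - k i).choose m : ℝ) * x i ^ m * (1 - x i) ^ (n - k i - m))) :
    mixedPartial k (cubeBernstein d n f) x =
      ((∏ i, (n.descFactorial (k i) : ℝ)) / (n : ℝ) ^ (∑ i, k i)) *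
        ∫ ω, (n : ℝ) ^ (∑ i, k i) *
          multiFwdDiffN n k f (fun i => (ξ i ω : ℝ) / n) ∂μ :=
  cubeBernstein_mixedPartial_eq_expectation_general μ d n hn x hx k f ξ hmeas hindep hdist
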